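/- Let A and B be inf semi-lattices and let their tensor product A ⊗ B be the inf semi-lattice generated by pure tensors a ⊗ b subject only to the bi-homomorphism relations (a ⊓ a') ⊗ b = (a ⊗ b) ⊓ (a' ⊗ b) and a ⊗ (b ⊓ b') = (a ⊗ b) ⊓ (a ⊗ b'). For elements a, a₁, …, aₙ ∈ A and b, b₁, …, bₙ ∈ B, the inequality ⊓ᵢ (aᵢ ⊗ bᵢ) ≤ a ⊗ b holds in A ⊗ B if and only if there exists an n-ary lattice polynomial p with p(a₁, …, aₙ) ≤ a in A and p*(b₁, …, bₙ) ≤ b in B, where p* is the polynomial obtained by dualizing the lattice operations of p. -/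

import Mathlib

/-- `n`-ary lattice polynomials: terms built from `n` variables using meet and join. -/
inductive LatPoly (n : ℕ) where
  | var : Fin n → LatPoly n
  | meet : LatPoly n → LatPoly n → LatPoly n
  | join : LatPoly n → LatPoly n → LatPoly n

namespace LatPoly

/-- Evaluation of a lattice polynomial at a tuple of lattice elements. -/
def eval {L : Type*} [Lattice L] {n : ℕ} (v : Fin n → L) : LatPoly n → L
  | .var i => v i
  | .meet p q => eval v p ⊓ eval v q
  | .join p q => eval v p ⊔ eval v q

/-- The dual polynomial `p*`, obtained by swapping meets and joins. -/
def dual {n : ℕ} : LatPoly n → LatPoly n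
  | .var i => .var i
  | .meet p q => .join (dual p) (dual q)
  | .join p q => .meet (dual p) (dual q)

end LatPoly

universe u

/-!
Write `P(x, y)` for "some lattice polynomial `p` has `p(a₁, …, aₙ) ≤ x` and `p*(b₁, …, bₙ) ≤ y`".
If `P(x, y)` holds then `⊓ᵢ (aᵢ ⊗ bᵢ) ≤ x ⊗ y`, by induction on the witness: a meet `p ⊓ q`
is handled by `(x ⊓ x') ⊗ y = (x ⊗ y) ⊓ (x' ⊗ y)`, a join by the relation in the second factor.
Conversely, `P` is itself a bi-homomorphism into `Prop` ordered by implication: witnesses for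
`(x, y)` and `(x', y)` combine by `⊓` into one for `(x ⊓ x', y)`, and dually by `⊔` in the second
factor. So `P` factors through `A ⊗ B` by a meet-preserving, hence monotone, map, which is true
on every `aᵢ ⊗ bᵢ`, hence on their meet, hence on `a ⊗ b`.
-/

theorem apply_le_apply_of_map_inf₂ {α β γ : Type*} [SemilatticeInf α] [SemilatticeInf β]
    [SemilatticeInf γ] {f : α → β → γ} (h₁ : ∀ a a' b, f (a ⊓ a') b = f a b ⊓ f a' b)
    (h₂ : ∀ a b b', f a (b ⊓ b') = f a b ⊓ f a b') {a a' : α} {b b' : β} (ha : a ≤ a')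
    (hb : b ≤ b') : f a b ≤ f a' b' :=
  (Monotone.of_map_inf (f := (f · b)) (h₁ · · b) ha).trans
    (Monotone.of_map_inf (f := f a') (h₂ a' · ·) hb)

namespace LatPoly

variable {A B : Type*} [Lattice A] [Lattice B] {n : ℕ}

def Bounded (as : Fin n → A) (bs : Fin n → B) (x : A) (y : B) : Prop :=
  ∃ p : LatPoly n, p.eval as ≤ x ∧ p.dual.eval bs ≤ y

variable {as : Fin n → A} {bs : Fin n → B} {x x' : A} {y y' : B}

theorem bounded_var (i : Fin n) : Bounded as bs (as i) (bs i) :=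
  ⟨.var i, le_rfl, le_rfl⟩

theorem Bounded.mono (h : Bounded as bs x y) (hx : x ≤ x') (hy : y ≤ y') :
    Bounded as bs x' y' :=
  let ⟨p, hpx, hpy⟩ := h
  ⟨p, hpx.trans hx, hpy.trans hy⟩

theorem bounded_inf_left : Bounded as bs (x ⊓ x') y ↔ Bounded as bs x y ∧ Bounded as bs x' y :=
  ⟨fun h => ⟨h.mono inf_le_left le_rfl, h.mono inf_le_right le_rfl⟩,
    fun ⟨⟨p, hpx, hpy⟩, ⟨q, hqx, hqy⟩⟩ => ⟨.meet p q, inf_le_inf hpx hqx, sup_le hpy hqy⟩⟩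

theorem bounded_inf_right : Bounded as bs x (y ⊓ y') ↔ Bounded as bs x y ∧ Bounded as bs x y' :=
  ⟨fun h => ⟨h.mono le_rfl inf_le_left, h.mono le_rfl inf_le_right⟩,
    fun ⟨⟨p, hpx, hpy⟩, ⟨q, hqx, hqy⟩⟩ => ⟨.join p q, sup_le hpx hqx, inf_le_inf hpy hqy⟩⟩

theorem Bounded.le_apply {C : Type*} [SemilatticeInf C] {ι : A → B → C}
    (hι₁ : ∀ x x' y, ι (x ⊓ x') y = ι x y ⊓ ι x' y) (hι₂ : ∀ x y y', ι x (y ⊓ y') = ι x y ⊓ ι x y')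
    {c : C} (hc : ∀ i, c ≤ ι (as i) (bs i)) (h : Bounded as bs x y) : c ≤ ι x y := by
  obtain ⟨p, hpx, hpy⟩ := h
  induction p generalizing x y with
  | var i => exact (hc i).trans (apply_le_apply_of_map_inf₂ hι₁ hι₂ hpx hpy)
  | meet p q ihp ihq =>
    obtain ⟨hpy, hqy⟩ := sup_le_iff.mp hpy
    calc c ≤ ι (p.eval as) y ⊓ ι (q.eval as) y := le_inf (ihp le_rfl hpy) (ihq le_rfl hqy)
      _ = ι (p.eval as ⊓ q.eval as) y := (hι₁ _ _ _).symm
      _ ≤ ι x y := apply_le_apply_of_map_inf₂ hι₁ hι₂ hpx le_rfl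
  | join p q ihp ihq =>
    obtain ⟨hpx, hqx⟩ := sup_le_iff.mp hpx
    calc c ≤ ι x (p.dual.eval bs) ⊓ ι x (q.dual.eval bs) :=
          le_inf (ihp hpx le_rfl) (ihq hqx le_rfl)
      _ = ι x (p.dual.eval bs ⊓ q.dual.eval bs) := (hι₂ _ _ _).symm
      _ ≤ ι x y := apply_le_apply_of_map_inf₂ hι₁ hι₂ le_rfl hpy

end LatPoly

/-- In the semilattice tensor product `C = A ⊗ B` of two lattices (the universal recipient of a
bi-homomorphism `ι` from `A × B`), `⊓ᵢ (aᵢ ⊗ bᵢ) ≤ a ⊗ b` holds iff there is an `n`-ary lattice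
polynomial `p` with `p(a₁, …, aₙ) ≤ a` and `p*(b₁, …, bₙ) ≤ b`. -/
theorem tensor_le_iff_lattice_polynomial
    {A B C : Type u} [Lattice A] [Lattice B] [SemilatticeInf C]
    (ι : A → B → C)
    (hbi1 : ∀ a a' : A, ∀ b : B, ι (a ⊓ a') b = ι a b ⊓ ι a' b)
    (hbi2 : ∀ a : A, ∀ b b' : B, ι a (b ⊓ b') = ι a b ⊓ ι a b')
    (huniv : ∀ (D : Type u) [SemilatticeInf D] (f : A → B → D),
      (∀ a a' : A, ∀ b : B, f (a ⊓ a') b = f a b ⊓ f a' b) →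
      (∀ a : A, ∀ b b' : B, f a (b ⊓ b') = f a b ⊓ f a b') →
      ∃! g : C → D, (∀ x y : C, g (x ⊓ y) = g x ⊓ g y) ∧ ∀ a b, g (ι a b) = f a b)
    (n : ℕ) (hn : 0 < n) (as : Fin n → A) (bs : Fin n → B) (a : A) (b : B) :
    Finset.univ.inf' (Finset.univ_nonempty_iff.mpr ⟨⟨0, hn⟩⟩)
        (fun i => ι (as i) (bs i)) ≤ ι a b ↔
      ∃ p : LatPoly n, p.eval as ≤ a ∧ p.dual.eval bs ≤ b := by
  constructor
  · intro h
    -- `Prop` is lifted because the universal property only reaches targets in `Type u`.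
    obtain ⟨g, ⟨g_inf, g_ι⟩, -⟩ := huniv (ULift.{u} Prop)
      (fun x y => ULift.up (LatPoly.Bounded as bs x y))
      (fun _ _ _ => congrArg ULift.up (propext LatPoly.bounded_inf_left))
      (fun _ _ _ => congrArg ULift.up (propext LatPoly.bounded_inf_right))
    have hg := Monotone.of_map_inf g_inf h
    rw [Finset.apply_inf'_eq_inf'_comp _ g g_inf, g_ι] at hg
    refine (le_trans ?_ hg : ULift.up True ≤ _) trivial
    refine Finset.le_inf' _ _ fun i _ => ?_
    rw [Function.comp_apply, g_ι]
    exact fun _ => LatPoly.bounded_var i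
  · exact LatPoly.Bounded.le_apply hbi1 hbi2 fun i => Finset.inf'_le _ (Finset.mem_univ i)
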